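/- For any n×n positive definite complex matrix A, the matrix logarithm has the integral representation log A = ∫₀^∞ ((1/(1+s))·I − (A + s·I)⁻¹) ds. -/

import Mathlib

open Matrix MeasureTheory
open scoped ComplexOrder

/-- Matrix logarithm on the support: apply `Real.log` (which is `0` at `0`) to the
eigenvalues of a Hermitian matrix via functional calculus; junk value `0` otherwise. -/
noncomputable def mlog {n : Type*} [Fintype n] [DecidableEq n] (A : Matrix n n ℂ) :
    Matrix n n ℂ :=
  if hA : A.IsHermitian then hA.cfc Real.log else 0

/-- Quantum relative entropy `S(A‖B) = Tr A (log A - log B)`. -/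
noncomputable def qRelEnt {n : Type*} [Fintype n] [DecidableEq n] (A B : Matrix n n ℂ) : ℝ :=
  ((A * (mlog A - mlog B)).trace).re

/-- Square root of a positive semidefinite matrix, as `Matrix.PosSemidef.sqrt` was defined in the
older Mathlib (since removed). -/
noncomputable def psdSqrt {n : Type*} [Fintype n] [DecidableEq n] {A : Matrix n n ℂ}
    (hA : A.PosSemidef) : Matrix n n ℂ :=
  hA.1.eigenvectorUnitary.1 * diagonal ((↑) ∘ (√·) ∘ hA.1.eigenvalues) *
    (star hA.1.eigenvectorUnitary : Matrix n n ℂ)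

theorem psdSqrt_isHermitian {n : Type*} [Fintype n] [DecidableEq n] {A : Matrix n n ℂ}
    (hA : A.PosSemidef) : (psdSqrt hA).IsHermitian := by
  have h := isHermitian_mul_mul_conjTranspose (hA.1.eigenvectorUnitary : Matrix n n ℂ)
    (isHermitian_diagonal_of_self_adjoint
      (((↑) : ℝ → ℂ) ∘ (√·) ∘ hA.1.eigenvalues) (funext fun i => Complex.conj_ofReal _))
  simpa [psdSqrt, star_eq_conjTranspose] using h

/-- Trace norm `‖X‖₁ = Tr √(Xᴴ X)`. -/
noncomputable def traceNorm {n : Type*} [Fintype n] [DecidableEq n] (X : Matrix n n ℂ) : ℝ :=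
  ((psdSqrt (Matrix.posSemidef_conjTranspose_mul_self X)).trace).re

/-- Smallest eigenvalue of a Hermitian matrix (junk value `0` otherwise). -/
noncomputable def lamMin {n : Type*} [Fintype n] [DecidableEq n] (A : Matrix n n ℂ) : ℝ :=
  if hA : A.IsHermitian then ⨅ i, hA.eigenvalues i else 0

/-- Largest eigenvalue of a Hermitian matrix (junk value `0` otherwise). -/
noncomputable def lamMax {n : Type*} [Fintype n] [DecidableEq n] (A : Matrix n n ℂ) : ℝ :=
  if hA : A.IsHermitian then ⨆ i, hA.eigenvalues i else 0

/-- Operator norm: largest eigenvalue of `√(Xᴴ X)` (largest singular value). -/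
noncomputable def opNorm {n : Type*} [Fintype n] [DecidableEq n] (X : Matrix n n ℂ) : ℝ :=
  ⨆ i, (psdSqrt_isHermitian (Matrix.posSemidef_conjTranspose_mul_self X)).eigenvalues i

/-! For `s > 0` the integrand is `cfc (fun x => (1 + s)⁻¹ - (x + s)⁻¹) A`. The functional calculus
of a matrix is a finite sum over its eigenvalues, so it commutes with the entrywise integral, and
the claim reduces to the scalar identity `∫₀^∞ ((1 + s)⁻¹ - (x + s)⁻¹) ds = log x` for `x > 0`:
the integrand has the antiderivative `log (1 + s) - log (x + s)`, which tends to `0` at infinity. -/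

open Filter Set Real Topology

section LogIntegral

variable {x : ℝ}

lemma hasDerivAt_log_one_add_sub_log_add (hx : 0 < x) {s : ℝ} (hs : 0 ≤ s) :
    HasDerivAt (fun t => log (1 + t) - log (x + t)) ((1 + s)⁻¹ - (x + s)⁻¹) s := by
  have h1 := ((hasDerivAt_id' s).const_add 1).log (by linarith)
  have h2 := ((hasDerivAt_id' s).const_add x).log (by linarith)
  simpa using h1.fun_sub h2

lemma tendsto_log_one_add_sub_log_add (x : ℝ) :
    Tendsto (fun t => log (1 + t) - log (x + t)) atTop (𝓝 0) := by
  have hratio : Tendsto (fun t => 1 + (1 - x) / (x + t)) atTop (𝓝 1) := by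
    simpa using tendsto_const_nhds.add
      (tendsto_const_nhds.div_atTop (tendsto_atTop_add_const_left _ x tendsto_id))
  have hlog := ((continuousAt_log one_ne_zero).tendsto.comp hratio)
  rw [log_one] at hlog
  refine hlog.congr' ?_
  filter_upwards [eventually_gt_atTop 0, eventually_gt_atTop (-x)] with t ht hxt
  have h1 : 0 < 1 + t := by linarith
  have h2 : 0 < x + t := by linarith
  rw [Function.comp_apply, ← log_div h1.ne' h2.ne']
  congr 1
  field_simp
  ring

lemma integrableOn_Ioi_inv_one_add_sub_inv_add (hx : 0 < x) :
    IntegrableOn (fun s => (1 + s)⁻¹ - (x + s)⁻¹) (Ioi 0) := by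
  have hderiv := fun s (hs : s ∈ Ici (0 : ℝ)) => hasDerivAt_log_one_add_sub_log_add hx hs.out
  rcases le_total 1 x with h | h
  · refine integrableOn_Ioi_deriv_of_nonneg' hderiv (fun s hs => ?_)
      (tendsto_log_one_add_sub_log_add x)
    have := inv_anti₀ (by linarith [hs.out] : (0 : ℝ) < 1 + s) (by linarith : 1 + s ≤ x + s)
    linarith
  · refine integrableOn_Ioi_deriv_of_nonpos' hderiv (fun s hs => ?_)
      (tendsto_log_one_add_sub_log_add x)
    have := inv_anti₀ (by linarith [hs.out] : 0 < x + s) (by linarith : x + s ≤ 1 + s)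
    linarith

lemma integral_Ioi_inv_one_add_sub_inv_add (hx : 0 < x) :
    ∫ s in Ioi 0, ((1 + s)⁻¹ - (x + s)⁻¹) = log x := by
  rw [integral_Ioi_of_hasDerivAt_of_tendsto'
    (fun s hs => hasDerivAt_log_one_add_sub_log_add hx hs.out)
    (integrableOn_Ioi_inv_one_add_sub_inv_add hx) (tendsto_log_one_add_sub_log_add x)]
  simp

end LogIntegral

namespace Matrix

variable {n 𝕜 : Type*} [RCLike 𝕜] [Fintype n] [DecidableEq n] {A : Matrix n n 𝕜}

lemma PosDef.pos_of_mem_spectrum_real (hA : A.PosDef) {x : ℝ} (hx : x ∈ spectrum ℝ A) :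
    0 < x := by
  obtain ⟨k, rfl⟩ := hA.isHermitian.spectrum_real_eq_range_eigenvalues ▸ hx
  exact hA.eigenvalues_pos k

namespace IsHermitian

lemma cfc_apply_eq_sum (hA : A.IsHermitian) (f : ℝ → ℝ) (i j : n) :
    cfc f A i j = ∑ k, (hA.eigenvectorUnitary : Matrix n n 𝕜) i k * (f (hA.eigenvalues k) : 𝕜) *
      (star (hA.eigenvectorUnitary : Matrix n n 𝕜)) k j := by
  rw [hA.cfc_eq, IsHermitian.cfc, Unitary.conjStarAlgAut_apply, mul_apply]
  simp [mul_diagonal]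

lemma integral_cfc_apply {α : Type*} [MeasurableSpace α] {μ : Measure α} (hA : A.IsHermitian)
    (f : α → ℝ → ℝ) (hf : ∀ x ∈ spectrum ℝ A, Integrable (fun s => f s x) μ) (i j : n) :
    ∫ s, cfc (f s) A i j ∂μ = cfc (fun x => ∫ s, f s x ∂μ) A i j := by
  simp only [hA.cfc_apply_eq_sum]
  rw [integral_finsetSum _ fun k _ =>
    ((hf _ (hA.eigenvalues_mem_spectrum_real k)).ofReal.const_mul _).mul_const _]
  simp only [integral_mul_const, integral_const_mul, integral_ofReal]

lemma cfc_const_sub_inv_add (hA : A.IsHermitian) (c s : ℝ)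
    (hs : ∀ x ∈ spectrum ℝ A, x + s ≠ 0) :
    cfc (fun x => c - (x + s)⁻¹) A = (c : 𝕜) • 1 - (A + (s : 𝕜) • 1)⁻¹ := by
  have hcont (f : ℝ → ℝ) : ContinuousOn f (spectrum ℝ A) := A.finite_real_spectrum.continuousOn f
  rw [cfc_sub _ _ _ (hcont _) (hcont _), cfc_const c A hA.isSelfAdjoint,
    cfc_inv _ _ hs (hcont _) hA.isSelfAdjoint, cfc_add_const _ _ _ (hcont _) hA.isSelfAdjoint,
    cfc_id' ℝ A, nonsing_inv_eq_ringInverse, Algebra.algebraMap_eq_smul_one,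
    Algebra.algebraMap_eq_smul_one, RCLike.real_smul_eq_coe_smul (K := 𝕜), RCLike.real_smul_eq_coe_smul (K := 𝕜)]

end IsHermitian

end Matrix

/-- Integral representation of the matrix logarithm of a positive definite matrix
(entrywise integral). -/
theorem mlog_eq_integral {n : Type*} [Fintype n] [DecidableEq n]
    (A : Matrix n n ℂ) (hA : A.PosDef) :
    mlog A = Matrix.of (fun i j => ∫ s in Set.Ioi (0 : ℝ),
      ((((1 / (1 + s) : ℝ)) : ℂ) • (1 : Matrix n n ℂ) - (A + (s : ℂ) • 1)⁻¹) i j) := by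
  have hH := hA.isHermitian
  have hpos := fun x (hx : x ∈ spectrum ℝ A) => hA.pos_of_mem_spectrum_real hx
  have hintegrand : ∀ s ∈ Ioi (0 : ℝ), cfc (fun x => (1 + s)⁻¹ - (x + s)⁻¹) A
      = (((1 / (1 + s) : ℝ)) : ℂ) • (1 : Matrix n n ℂ) - (A + (s : ℂ) • 1)⁻¹ := fun s hs => by
    rw [one_div]
    exact hH.cfc_const_sub_inv_add _ s fun x hx =>
      (by linarith [hpos x hx, hs.out] : 0 < x + s).ne'
  ext i j
  rw [mlog, dif_pos hH, ← hH.cfc_eq, of_apply,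
    ← setIntegral_congr_fun measurableSet_Ioi fun s hs => congrFun₂ (hintegrand s hs) i j,
    hH.integral_cfc_apply _ fun x hx => integrableOn_Ioi_inv_one_add_sub_inv_add (hpos x hx),
    cfc_congr fun x hx => integral_Ioi_inv_one_add_sub_inv_add (hpos x hx)]
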